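/- (Proposition 1, Types I and II.) Let γ₁, γ₂ ∈ ℂ and let n be a positive integer. With u_I = u_II := −n/2: (I) for E_I := −n(iγ₁ + γ₂n), one has Φ(B, E_I, u_I) = −B(B − n − 1)(iγ₁ + 2γ₂(B − 1))(iγ₁ − 2γ₂(B − n)) for all B ∈ ℂ; in particular Φ(0, E_I, u_I) = 0 and Φ(n+1, E_I, u_I) = 0. (II) For E_II := (n + 2)(iγ₁ − γ₂(n + 2)), one has Φ(B, E_II, u_II) = −B(B − n − 1)(iγ₁ − 2γ₂(B + 1))(iγ₁ + 2γ₂(B − n − 2)) for all B ∈ ℂ; in particular Φ(0, E_II, u_II) = 0 and Φ(n+1, E_II, u_II) = 0. -/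
import Mathlib


noncomputable section
open Complex

/-- `Φ₁(B,E,u) = (1/4)(E − 2iγ₁(B+u) + 4γ₂(B+u)²)`. -/
def Phi1 (γ₁ γ₂ B E u : ℂ) : ℂ :=
  (1/4) * (E - 2*I*γ₁*(B + u) + 4*γ₂*(B + u)^2)

/-- `Φ₂(B,E,u) = E + 2iγ₁(B+u−1) + 4γ₂(B+u−1)²`. -/
def Phi2 (γ₁ γ₂ B E u : ℂ) : ℂ :=
  E + 2*I*γ₁*(B + u - 1) + 4*γ₂*(B + u - 1)^2

/-- `Φ = Φ₁·Φ₂`, the structure function of the quadratic quantum Zernike system. -/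
def Phi (γ₁ γ₂ B E u : ℂ) : ℂ := Phi1 γ₁ γ₂ B E u * Phi2 γ₁ γ₂ B E u

/-- Proposition 1, Types I and II. -/
theorem prop1_types_I_II (γ₁ γ₂ : ℂ) (n : ℕ) (hn : 1 ≤ n) :
    (∀ B : ℂ, Phi γ₁ γ₂ B (-(n : ℂ) * (I*γ₁ + γ₂*(n : ℂ))) (-(n : ℂ)/2)
        = -B * (B - (n : ℂ) - 1) * (I*γ₁ + 2*γ₂*(B - 1)) * (I*γ₁ - 2*γ₂*(B - (n : ℂ)))) ∧
    Phi γ₁ γ₂ 0 (-(n : ℂ) * (I*γ₁ + γ₂*(n : ℂ))) (-(n : ℂ)/2) = 0 ∧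
    Phi γ₁ γ₂ ((n : ℂ) + 1) (-(n : ℂ) * (I*γ₁ + γ₂*(n : ℂ))) (-(n : ℂ)/2) = 0 ∧
    (∀ B : ℂ, Phi γ₁ γ₂ B (((n : ℂ) + 2) * (I*γ₁ - γ₂*((n : ℂ) + 2))) (-(n : ℂ)/2)
        = -B * (B - (n : ℂ) - 1) * (I*γ₁ - 2*γ₂*(B + 1)) * (I*γ₁ + 2*γ₂*(B - (n : ℂ) - 2))) ∧
    Phi γ₁ γ₂ 0 (((n : ℂ) + 2) * (I*γ₁ - γ₂*((n : ℂ) + 2))) (-(n : ℂ)/2) = 0 ∧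
    Phi γ₁ γ₂ ((n : ℂ) + 1) (((n : ℂ) + 2) * (I*γ₁ - γ₂*((n : ℂ) + 2))) (-(n : ℂ)/2) = 0 := by
  have hI : ∀ B : ℂ, Phi γ₁ γ₂ B (-(n : ℂ) * (I*γ₁ + γ₂*(n : ℂ))) (-(n : ℂ)/2)
      = -B * (B - (n : ℂ) - 1) * (I*γ₁ + 2*γ₂*(B - 1)) * (I*γ₁ - 2*γ₂*(B - (n : ℂ))) := by
    intro B; simp only [Phi, Phi1, Phi2]; ring
  have hII : ∀ B : ℂ, Phi γ₁ γ₂ B (((n : ℂ) + 2) * (I*γ₁ - γ₂*((n : ℂ) + 2))) (-(n : ℂ)/2)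
      = -B * (B - (n : ℂ) - 1) * (I*γ₁ - 2*γ₂*(B + 1)) * (I*γ₁ + 2*γ₂*(B - (n : ℂ) - 2)) := by
    intro B; simp only [Phi, Phi1, Phi2]; ring
  refine ⟨hI, ?_, ?_, hII, ?_, ?_⟩
  · rw [hI 0]; ring
  · rw [hI ((n : ℂ) + 1)]; ring
  · rw [hII 0]; ring
  · rw [hII ((n : ℂ) + 1)]; ring
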